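/- arXiv:2309.10092 — 2 statements merged into one kernel-verified Lean document; each statement's English description precedes it below -/
import Mathlib

section
/- Let X_1, …, X_{M+1} be i.i.d. real-valued random variables whose common distribution is atomless, let α ∈ (0,1), and set k = ⌈(M+1)(1−α)⌉; assume k ≤ M. Let q be the k-th smallest value among X_1, …, X_M. Then P(X_{M+1} ≤ q) ≥ 1 − α. -/
open MeasureTheory ProbabilityTheory

/-- The `k`-th smallest value (1-indexed) among `r 0, …, r (M-1)`: the `k`-th
element of the nondecreasing rearrangement of the values. -/
noncomputable def kthSmallest {M : ℕ} (r : Fin M → ℝ) (k : ℕ) : ℝ :=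
  ((List.ofFn r).mergeSort (fun a b => a ≤ b)).getD (k - 1) 0

/-!
If fewer than `k` of the scores lie strictly below the test score, the test score is at most
the `k`-th smallest calibration score. In every realization at least `k` of the `M + 1` indices
have fewer than `k` scores strictly below them: if some index has `k` or more, those strictly
below the smallest such index qualify. An i.i.d. family is exchangeable, so each index has this
property with the same probability, which is therefore at least `k / (M + 1) ≥ 1 - α`.
-/

open Finset
open scoped ENNReal

lemma List.SortedLE.succ_le_countP_lt {α : Type*} [Preorder α] [DecidableLT α] {l : List α}
    (hl : l.SortedLE) {j : ℕ} (hj : j < l.length) {x : α} (hx : l[j] < x) :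
    j + 1 ≤ l.countP (· < x) := by
  have hprefix : (l.take (j + 1)).countP (· < x) = j + 1 := by
    rw [List.countP_eq_length.mpr, List.length_take_of_le hj]
    intro a ha
    obtain ⟨i, hi, rfl⟩ := List.mem_iff_getElem.mp ha
    rw [List.getElem_take]
    simp only [List.length_take] at hi
    exact decide_eq_true (lt_of_le_of_lt (hl.getElem_le_getElem_of_le (by omega)) hx)
  exact hprefix ▸ (l.take_sublist _).countP_le

lemma le_kthSmallest_of_card_lt {M k : ℕ} (r : Fin M → ℝ) (hkM : k ≤ M) {x : ℝ}
    (hx : #{i | r i < x} < k) : x ≤ kthSmallest r k := by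
  set l := (List.ofFn r).mergeSort (fun a b => a ≤ b)
  have hlen : l.length = M := by simp [l]
  have hcount : l.countP (· < x) = #{i | r i < x} := by
    rw [(List.mergeSort_perm _ _).countP_eq, ← Multiset.coe_countP, ← Fin.univ_val_map,
      Multiset.countP_map]
    rfl
  have hj : k - 1 < l.length := by omega
  rw [kthSmallest, List.getD_eq_getElem _ _ hj]
  by_contra! hlt
  have : k - 1 + 1 ≤ l.countP (· < x) := List.sortedLE_mergeSort.succ_le_countP_lt hj hlt
  omega

section StrictRank

variable {ι β : Type*} [Fintype ι] [LinearOrder β]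

def strictRank (f : ι → β) (j : ι) : ℕ := #{i | f i < f j}

lemma le_card_strictRank_lt (f : ι → β) {k : ℕ} (hk : k ≤ Fintype.card ι) :
    k ≤ #{j | strictRank f j < k} := by
  by_cases hT : ({j | k ≤ strictRank f j} : Finset ι).Nonempty
  · obtain ⟨j₀, hj₀, hmin⟩ := exists_min_image _ f hT
    calc k ≤ strictRank f j₀ := (mem_filter.mp hj₀).2
      _ ≤ #{j | strictRank f j < k} := card_le_card fun i hi ↦ by
          simp only [mem_filter, mem_univ, true_and] at hi ⊢
          by_contra! h
          exact (hmin i (by simpa using h)).not_gt hi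
  · rw [not_nonempty_iff_eq_empty, filter_eq_empty_iff] at hT
    rwa [filter_true_of_mem fun j _ ↦ not_le.mp (hT (mem_univ j)), card_univ]

lemma strictRank_comp_perm (f : ι → β) (e : Equiv.Perm ι) (j : ι) :
    strictRank (f ∘ e) j = strictRank f (e j) :=
  card_equiv e (by simp)

end StrictRank

lemma measurable_strictRank {ι : Type*} [Fintype ι] (j : ι) :
    Measurable fun g : ι → ℝ ↦ strictRank g j := by
  simp_rw [strictRank, card_filter]
  refine Finset.measurable_sum _ fun i _ ↦ Measurable.ite ?_ measurable_const measurable_const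
  exact measurableSet_lt (measurable_pi_apply i) (measurable_pi_apply j)

open Classical in
lemma natCast_mul_measure_univ_le_sum {α ι : Type*} [MeasurableSpace α] [Fintype ι]
    (ν : Measure α) {S : ι → Set α} (hS : ∀ j, MeasurableSet (S j)) {k : ℕ}
    (hcover : ∀ x, k ≤ #{j | x ∈ S j}) : (k : ℝ≥0∞) * ν Set.univ ≤ ∑ j, ν (S j) :=
  calc (k : ℝ≥0∞) * ν Set.univ = ∫⁻ _, (k : ℝ≥0∞) ∂ν := (lintegral_const _).symm
    _ ≤ ∫⁻ x, ∑ j, (S j).indicator 1 x ∂ν := lintegral_mono fun x ↦ by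
        simp only [Set.indicator_apply, Pi.one_apply, sum_boole]
        exact_mod_cast hcover x
    _ = ∑ j, ν (S j) := by
        rw [lintegral_finsetSum _ fun j _ ↦ measurable_one.indicator (hS j)]
        simp_rw [lintegral_indicator_one (hS _)]

section IID

variable {Ω ι : Type*} [MeasurableSpace Ω] [Fintype ι] {P : Measure Ω}

-- An i.i.d. family is exchangeable: both laws are the product measure `μ ^ ι`.
lemma map_comp_perm_eq_of_iIndepFun {β : Type*} [MeasurableSpace β] {X : ι → Ω → β}
    {μ : Measure β} (hmeas : ∀ i, Measurable (X i)) (hident : ∀ i, P.map (X i) = μ)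
    (hindep : iIndepFun X P) (e : Equiv.Perm ι) :
    P.map (fun ω i ↦ X (e i) ω) = P.map (fun ω i ↦ X i ω) := by
  rw [(hindep.precomp e.injective).map_fun_eq_pi_map fun i ↦ (hmeas _).aemeasurable,
    hindep.map_fun_eq_pi_map fun i ↦ (hmeas i).aemeasurable]
  simp only [hident]

variable [DecidableEq ι] {X : ι → Ω → ℝ} {μ : Measure ℝ}

lemma measure_strictRank_lt_eq (hmeas : ∀ i, Measurable (X i)) (hident : ∀ i, P.map (X i) = μ)
    (hindep : iIndepFun X P) (k : ℕ) (j j' : ι) :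
    P {ω | strictRank (X · ω) j < k} = P {ω | strictRank (X · ω) j' < k} := by
  have hA : MeasurableSet {g : ι → ℝ | strictRank g j' < k} :=
    measurable_strictRank j' measurableSet_Iio
  have hswap : {ω | strictRank (X · ω) j < k} =
      (fun ω i ↦ X (Equiv.swap j' j i) ω) ⁻¹' {g | strictRank g j' < k} := by
    ext ω
    show strictRank (X · ω) j < k ↔ strictRank ((X · ω) ∘ Equiv.swap j' j) j' < k
    rw [strictRank_comp_perm, Equiv.swap_apply_left]
  rw [hswap, ← Measure.map_apply (measurable_pi_lambda _ fun i ↦ hmeas _) hA,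
    map_comp_perm_eq_of_iIndepFun hmeas hident hindep,
    Measure.map_apply (measurable_pi_lambda _ hmeas) hA]
  rfl

lemma natCast_le_card_mul_measure_strictRank_lt [IsProbabilityMeasure P]
    (hmeas : ∀ i, Measurable (X i)) (hident : ∀ i, P.map (X i) = μ) (hindep : iIndepFun X P)
    {k : ℕ} (hk : k ≤ Fintype.card ι) (j : ι) :
    (k : ℝ≥0∞) ≤ Fintype.card ι * P {ω | strictRank (X · ω) j < k} := by
  have hS : ∀ j, MeasurableSet {ω | strictRank (X · ω) j < k} := fun j ↦
    (measurable_strictRank j).comp (measurable_pi_lambda _ hmeas) measurableSet_Iio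
  calc (k : ℝ≥0∞) = k * P Set.univ := by simp
    _ ≤ ∑ j', P {ω | strictRank (X · ω) j' < k} :=
        natCast_mul_measure_univ_le_sum P hS fun ω ↦ by
          simpa using le_card_strictRank_lt (X · ω) hk
    _ = Fintype.card ι * P {ω | strictRank (X · ω) j < k} := by
        simp [measure_strictRank_lt_eq hmeas hident hindep k _ j]

end IID

lemma card_castSucc_lt_le_strictRank_last {M : ℕ} (f : Fin (M + 1) → ℝ) :
    #{i : Fin M | f i.castSucc < f (Fin.last M)} ≤ strictRank f (Fin.last M) :=
  card_le_card_of_injOn Fin.castSucc (fun i hi ↦ by simpa using hi)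
    (Fin.castSucc_injective M).injOn

theorem conformal_coverage_general
    {Ω : Type*} [MeasurableSpace Ω] (P : Measure Ω) [IsProbabilityMeasure P]
    (M : ℕ) (X : Fin (M + 1) → Ω → ℝ)
    (hmeas : ∀ i, Measurable (X i))
    (μ : Measure ℝ)
    (hident : ∀ i, Measure.map (X i) P = μ)
    (hindep : iIndepFun X P)
    (α : ℝ)
    (k : ℕ) (hk : k = ⌈((M : ℝ) + 1) * (1 - α)⌉₊) (hkM : k ≤ M) :
    ENNReal.ofReal (1 - α) ≤
      P {ω | X (Fin.last M) ω ≤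
        kthSmallest (fun i : Fin M => X i.castSucc ω) k} := by
  have hrank : (k : ℝ≥0∞) ≤ (M + 1) * P {ω | strictRank (X · ω) (Fin.last M) < k} := by
    simpa using natCast_le_card_mul_measure_strictRank_lt hmeas hident hindep
      (by simpa using hkM.trans M.le_succ) (Fin.last M)
  have hquantile : (M + 1) * ENNReal.ofReal (1 - α) ≤ k := by
    rw [← ENNReal.ofReal_natCast k, ← ENNReal.ofReal_natCast M, ← ENNReal.ofReal_one,
      ← ENNReal.ofReal_add (by positivity) zero_le_one, ← ENNReal.ofReal_mul (by positivity)]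
    exact ENNReal.ofReal_le_ofReal (hk ▸ Nat.le_ceil _)
  have hevent : {ω | strictRank (X · ω) (Fin.last M) < k} ⊆
      {ω | X (Fin.last M) ω ≤ kthSmallest (fun i : Fin M => X i.castSucc ω) k} :=
    fun ω hω ↦ le_kthSmallest_of_card_lt _ hkM
      ((card_castSucc_lt_le_strictRank_last (X · ω)).trans_lt hω)
  refine (ENNReal.mul_le_mul_iff_right (a := M + 1) (by simp) (by simp)).mp ?_
  exact hquantile.trans (hrank.trans (by gcongr))

/-- Split conformal prediction coverage guarantee: if `X 0, …, X M` are i.i.d.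
with atomless common distribution, `α ∈ (0,1)`, `k = ⌈(M+1)(1-α)⌉ ≤ M`, and `q`
is the `k`-th smallest of the first `M` variables, then
`P(X (last) ≤ q) ≥ 1 - α`. -/
theorem conformal_coverage
    {Ω : Type*} [MeasurableSpace Ω] (P : Measure Ω) [IsProbabilityMeasure P]
    (M : ℕ) (X : Fin (M + 1) → Ω → ℝ)
    (hmeas : ∀ i, Measurable (X i))
    (μ : Measure ℝ)
    (hident : ∀ i, Measure.map (X i) P = μ)
    (hatomless : ∀ x : ℝ, μ {x} = 0)
    (hindep : iIndepFun X P)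
    (α : ℝ) (hα : α ∈ Set.Ioo (0 : ℝ) 1)
    (k : ℕ) (hk : k = ⌈((M : ℝ) + 1) * (1 - α)⌉₊) (hkM : k ≤ M) :
    ENNReal.ofReal (1 - α) ≤
      P {ω | X (Fin.last M) ω ≤
        kthSmallest (fun i : Fin M => X i.castSucc ω) k} :=
  conformal_coverage_general P M X hmeas μ hident hindep α k hk hkM
end

section
/- Let X_1, …, X_{M+1} be i.i.d. real-valued random variables whose common distribution is atomless, let α ∈ (0,1), and set k = ⌈(M+1)(1−α)⌉; assume k ≤ M. Let q be the k-th smallest value among X_1, …, X_M. Then P(X_{M+1} < q) ≥ 1 − α. -/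
/-!
Write `x = (X₀, …, X_M)` and let `countLE x i` be the number of other coordinates `≤ x i`, so that
the event is `countLE x M < k`. The coordinates are i.i.d., so the law of `x` is invariant under
permutations and the events `countLE x i < k` all have the same probability. The law is also
atomless, so almost surely the coordinates are distinct, and then exactly `k` indices `i` satisfy
`countLE x i < k`, namely those of the `k` smallest values. Summing over `i`, each event has
probability `k / (M + 1)`, which is `≥ 1 - α` by the choice of `k`.
-/

open MeasureTheory ProbabilityTheory

open Finset

theorem List.Pairwise.getElem_le_iff_lt_countP {α : Type*} [LinearOrder α] {l : List α}
    (hl : l.Pairwise (· ≤ ·)) {i : ℕ} (hi : i < l.length) (y : α) :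
    l[i] ≤ y ↔ i < l.countP (· ≤ y) := by
  induction l generalizing i with
  | nil => simp at hi
  | cons a t ih =>
    rw [List.pairwise_cons] at hl
    by_cases ha : a ≤ y
    · cases i with
      | zero => simp [ha]
      | succ i => simp [ih hl.2 (by simpa using hi), ha]
    · have hbig : ∀ b ∈ a :: t, ¬ b ≤ y := by
        simp only [List.mem_cons, forall_eq_or_imp]
        exact ⟨ha, fun b hb h => ha ((hl.1 b hb).trans h)⟩
      rw [List.countP_eq_zero.2 fun b hb => by simpa using hbig b hb]
      simpa using hbig _ (List.getElem_mem hi)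

theorem List.countP_ofFn {α : Type*} {n : ℕ} (r : Fin n → α) (p : α → Bool) :
    (List.ofFn r).countP p = #{j | p (r j)} := by
  induction n with
  | zero => simp
  | succ n ih => simp [List.ofFn_succ, Fin.card_filter_univ_succ', List.countP_cons, ih, add_comm]

theorem lt_kthSmallest_iff {M k : ℕ} (r : Fin M → ℝ) (hk₁ : 1 ≤ k) (hkM : k ≤ M) (y : ℝ) :
    y < kthSmallest r k ↔ #{j | r j ≤ y} < k := by
  set l := (List.ofFn r).mergeSort (fun a b => a ≤ b)
  have hlen : k - 1 < l.length := by simp only [l, List.length_mergeSort, List.length_ofFn]; omega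
  have hcount : l.countP (· ≤ y) = #{j | r j ≤ y} := by
    rw [(List.mergeSort_perm _ _).countP_eq, List.countP_ofFn]
    simp
  rw [kthSmallest, List.getD_eq_getElem _ _ hlen, ← not_le,
    (List.pairwise_mergeSort' _ _).getElem_le_iff_lt_countP hlen, hcount]
  omega

section Rank

variable {ι α : Type*} [Fintype ι] [LinearOrder α]

theorem injective_card_lt {x : ι → α} (hx : Function.Injective x) :
    Function.Injective fun i => #{j | x j < x i} := by
  have hlt : ∀ {i j}, x i < x j → #{l | x l < x i} < #{l | x l < x j} := fun h =>
    card_lt_card <| (ssubset_iff_of_subset fun l => by simpa using (·.trans h)).2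
      ⟨_, by simpa using h, by simp⟩
  intro i j h
  by_contra hne
  rcases lt_or_gt_of_ne (hx.ne hne) with hij | hij
  · exact (hlt hij).ne h
  · exact (hlt hij).ne' h

variable [DecidableEq ι]

def countLE (x : ι → α) (i : ι) : ℕ := #{j | j ≠ i ∧ x j ≤ x i}

theorem countLE_eq_card_lt {x : ι → α} (hx : Function.Injective x) (i : ι) :
    countLE x i = #{j | x j < x i} := by
  unfold countLE
  congr 1 with j
  simp [lt_iff_le_and_ne, hx.ne_iff, and_comm]

theorem countLE_comp_perm (x : ι → α) (σ : Equiv.Perm ι) (i : ι) :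
    countLE (x ∘ σ) i = countLE x (σ i) :=
  card_equiv σ fun j => by simp

theorem countLE_last {M : ℕ} (x : Fin (M + 1) → α) :
    countLE x (Fin.last M) = #{j : Fin M | x j.castSucc ≤ x (Fin.last M)} := by
  rw [countLE, Fin.univ_castSuccEmb, filter_cons, if_neg (by simp), filter_map, card_map]
  simp [Function.comp_def, Fin.castSucc_ne_last]

/-- Without ties, `countLE x` is the rank counted from `0`, a bijection onto `Fin (card ι)`. -/
theorem card_countLE_lt {x : ι → α} (hx : Function.Injective x) {k : ℕ}
    (hk : k ≤ Fintype.card ι) : #{i | countLE x i < k} = k := by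
  let rank : ι → Fin (Fintype.card ι) := fun i =>
    ⟨#{j | x j < x i}, card_lt_univ_of_notMem (x := i) (by simp)⟩
  have hrank : Function.Bijective rank := by
    rw [Fintype.bijective_iff_injective_and_card, Fintype.card_fin]
    exact ⟨fun i j h => injective_card_lt hx (Fin.val_eq_of_eq h), rfl⟩
  calc #{i | countLE x i < k}
      = #{m : Fin (Fintype.card ι) | m < k} :=
        card_equiv (Equiv.ofBijective rank hrank) fun i => by
          simp [rank, countLE_eq_card_lt hx]
    _ = k := by rw [Fin.card_filter_val_lt, min_eq_right hk]

end Rank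

theorem MeasureTheory.sum_measure_eq_lintegral_card {β ι : Type*} [MeasurableSpace β] [Fintype ι]
    {s : ι → Set β} [∀ x, DecidablePred fun i => x ∈ s i] (hs : ∀ i, MeasurableSet (s i))
    (μ : Measure β) :
    ∑ i, μ (s i) = ∫⁻ x, (#{i | x ∈ s i} : ENNReal) ∂μ := by
  simp_rw [← lintegral_indicator_one (hs _)]
  rw [← lintegral_finsetSum _ fun i _ => measurable_one.indicator (hs i)]
  congr 1 with x
  simp [Set.indicator_apply, sum_boole]

theorem MeasureTheory.measurePreserving_comp_perm {ι α : Type*} [Fintype ι] [MeasurableSpace α]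
    (μ : Measure α) [SigmaFinite μ] (σ : Equiv.Perm ι) :
    MeasurePreserving (fun x : ι → α => x ∘ σ) (Measure.pi fun _ => μ)
      (Measure.pi fun _ => μ) := by
  convert measurePreserving_piCongrLeft (fun _ : ι => μ) σ.symm using 1
  ext x i
  simp [MeasurableEquiv.piCongrLeft, Equiv.piCongrLeft_apply_eq_cast]

section Independence

variable {Ω β : Type*} [MeasurableSpace Ω] [MeasurableSpace β] [MeasurableEq β]
  {P : Measure Ω} [IsProbabilityMeasure P]

theorem ProbabilityTheory.IndepFun.ae_ne {X Y : Ω → β} (hXY : IndepFun X Y P)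
    (hX : AEMeasurable X P) (hY : AEMeasurable Y P) [NullSingletonClass (P.map Y)] :
    ∀ᵐ ω ∂P, X ω ≠ Y ω := by
  have hdiag : (fun ω => (X ω, Y ω)) ⁻¹' Set.diagonal β = {ω | X ω = Y ω} := rfl
  rw [ae_iff]
  simp only [not_not]
  rw [← hdiag, ← Measure.map_apply_of_aemeasurable (hX.prodMk hY) measurableSet_diagonal,
    (indepFun_iff_map_prod_eq_prod_map_map hX hY).1 hXY, Measure.prod_apply measurableSet_diagonal]
  simp [Set.preimage, Set.diagonal]

theorem ProbabilityTheory.iIndepFun.ae_injective {ι : Type*} [Countable ι] {X : ι → Ω → β}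
    (hX : iIndepFun X P) (hXm : ∀ i, AEMeasurable (X i) P) {μ : Measure β}
    [NullSingletonClass μ] (hlaw : ∀ i, P.map (X i) = μ) :
    ∀ᵐ ω ∂P, Function.Injective fun i => X i ω := by
  have hne : ∀ i j, ∀ᵐ ω ∂P, i ≠ j → X i ω ≠ X j ω := by
    intro i j
    by_cases hij : i = j
    · exact .of_forall fun _ h => absurd hij h
    · have : NullSingletonClass (P.map (X j)) := hlaw j ▸ ‹_›
      filter_upwards [(hX.indepFun hij).ae_ne (hXm i) (hXm j)] with ω h _ using h
  filter_upwards [ae_all_iff.2 fun i => ae_all_iff.2 (hne i)] with ω h i j hij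
  by_contra hne
  exact h i j hne hij

end Independence

theorem MeasureTheory.Measure.ae_injective_pi {ι β : Type*} [Fintype ι] [MeasurableSpace β]
    [MeasurableEq β] (μ : Measure β) [IsProbabilityMeasure μ] [NullSingletonClass μ] :
    ∀ᵐ x ∂(Measure.pi fun _ : ι => μ), Function.Injective x :=
  (iIndepFun_pi (X := fun _ => id) fun _ => aemeasurable_id).ae_injective
    (fun i => (measurable_pi_apply i).aemeasurable) fun i => (measurePreserving_eval _ i).map_eq

section Exchangeable

variable {ι α : Type*} [Fintype ι] [DecidableEq ι] [TopologicalSpace α] [LinearOrder α]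
  [OrderClosedTopology α] [SecondCountableTopology α] [MeasurableSpace α] [OpensMeasurableSpace α]

theorem measurableSet_countLE_lt (i : ι) (k : ℕ) :
    MeasurableSet {x : ι → α | countLE x i < k} := by
  have hcount : Measurable fun x : ι → α => countLE x i := by
    simp only [countLE, card_filter]
    exact Finset.measurable_sum _ fun j _ => Measurable.ite ((MeasurableSet.const _).inter
      (measurableSet_le (measurable_pi_apply j) (measurable_pi_apply i)))
      measurable_const measurable_const
  exact hcount measurableSet_Iio

theorem measure_pi_countLE_lt (μ : Measure α) [IsProbabilityMeasure μ] [NullSingletonClass μ]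
    {k : ℕ} (hk : k ≤ Fintype.card ι) (i : ι) :
    Measure.pi (fun _ : ι => μ) {x | countLE x i < k} = k / Fintype.card ι := by
  set ν := Measure.pi fun _ : ι => μ
  have hmeas (j : ι) : MeasurableSet {x : ι → α | countLE x j < k} := measurableSet_countLE_lt j k
  have hexch : ∀ j, ν {x | countLE x j < k} = ν {x | countLE x i < k} := fun j => by
    rw [← (measurePreserving_comp_perm μ (Equiv.swap i j)).measure_preimage
      (hmeas i).nullMeasurableSet]
    congr 1 with x
    simp [countLE_comp_perm]
  have hsum : ∑ j, ν {x | countLE x j < k} = k := by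
    rw [sum_measure_eq_lintegral_card hmeas]
    simp only [Set.mem_ofPred_eq]
    rw [lintegral_congr_ae ((Measure.ae_injective_pi μ).mono fun x hx => by
      rw [card_countLE_lt hx hk]), lintegral_const, measure_univ, mul_one]
  rw [ENNReal.eq_div_iff (by simpa using (Fintype.card_pos_iff.2 ⟨i⟩).ne')
    (ENNReal.natCast_ne_top _), ← hsum, sum_congr rfl fun j _ => hexch j, sum_const,
    nsmul_eq_mul, card_univ]

end Exchangeable

/-- Split conformal prediction coverage guarantee: if `X 0, …, X M` are i.i.d.
with atomless common distribution, `α ∈ (0,1)`, `k = ⌈(M+1)(1-α)⌉ ≤ M`, and `q`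
is the `k`-th smallest of the first `M` variables, then
`P(X (last) < q) ≥ 1 - α` (strict version, valid since the distribution is atomless). -/
theorem conformal_coverage_strict
    {Ω : Type*} [MeasurableSpace Ω] (P : Measure Ω) [IsProbabilityMeasure P]
    (M : ℕ) (X : Fin (M + 1) → Ω → ℝ)
    (hmeas : ∀ i, Measurable (X i))
    (μ : Measure ℝ)
    (hident : ∀ i, Measure.map (X i) P = μ)
    (hatomless : ∀ x : ℝ, μ {x} = 0)
    (hindep : iIndepFun X P)
    (α : ℝ) (hα : α ∈ Set.Ioo (0 : ℝ) 1)
    (k : ℕ) (hk : k = ⌈((M : ℝ) + 1) * (1 - α)⌉₊) (hkM : k ≤ M) :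
    ENNReal.ofReal (1 - α) ≤
      P {ω | X (Fin.last M) ω <
        kthSmallest (fun i : Fin M => X i.castSucc ω) k} := by
  have : IsProbabilityMeasure μ :=
    hident 0 ▸ Measure.isProbabilityMeasure_map (hmeas 0).aemeasurable
  have : NullSingletonClass μ := ⟨hatomless⟩
  have hk₁ : 1 ≤ k := hk ▸ Nat.ceil_pos.2 (mul_pos (by positivity) (by linarith [hα.2]))
  have hlaw : P.map (fun ω i => X i ω) = Measure.pi fun _ => μ := by
    rw [(iIndepFun_iff_map_fun_eq_pi_map fun i => (hmeas i).aemeasurable).1 hindep]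
    simp_rw [hident]
  have hevent : {ω | X (Fin.last M) ω < kthSmallest (fun i : Fin M => X i.castSucc ω) k} =
      (fun ω i => X i ω) ⁻¹' {x | countLE x (Fin.last M) < k} := by
    ext ω
    simp [lt_kthSmallest_iff _ hk₁ hkM, countLE_last]
  rw [hevent, ← Measure.map_apply (measurable_pi_lambda _ hmeas)
      (measurableSet_countLE_lt _ k), hlaw,
    measure_pi_countLE_lt μ (by rw [Fintype.card_fin]; omega), Fintype.card_fin,
    ENNReal.le_div_iff_mul_le (by simp) (by simp)]
  calc ENNReal.ofReal (1 - α) * (M + 1 : ℕ)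
      = ENNReal.ofReal ((1 - α) * (M + 1)) := by
        rw [ENNReal.ofReal_mul (by linarith [hα.2]), ← ENNReal.ofReal_natCast]
        push_cast; rfl
    _ ≤ ENNReal.ofReal k := by
        rw [hk, mul_comm]
        exact ENNReal.ofReal_le_ofReal (Nat.le_ceil _)
    _ = k := ENNReal.ofReal_natCast k
end
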